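/- arXiv:2409.11693 — 8 statements merged into one kernel-verified Lean document; each statement's English description precedes it below -/
import Mathlib

section
/- Let m > 2 be an integer, n = 2m, and let a, b ∈ F_{2^n} satisfy ab(a+b) ≠ 0 and b ∉ a·F_{2^m}. Then the equation x^{2^m+3} + (x+a)^{2^m+3} + (x+b)^{2^m+3} + (x+a+b)^{2^m+3} = 0 has at most 4 solutions x ∈ F_{2^n}. -/
set_option maxHeartbeats 2000000
set_option maxRecDepth 8000

open Polynomial

theorem stmt_1 (m : ℕ) (hm : 2 < m) (K : Type*) [Field K] [Fintype K]
    (hcard : Fintype.card K = 2 ^ (2 * m)) (a b : K)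
    (hab : a * b * (a + b) ≠ 0)
    (hnot : ¬ ∃ l : K, l ^ (2 ^ m) = l ∧ b = a * l) :
    {x : K | x ^ (2 ^ m + 3) + (x + a) ^ (2 ^ m + 3) + (x + b) ^ (2 ^ m + 3)
      + (x + a + b) ^ (2 ^ m + 3) = 0}.ncard ≤ 4 := by
  classical
  have h2m : 2 * m ≠ 0 := by omega
  have hchar2 : ringChar K = 2 := by
    rw [FiniteField.even_card_iff_char_two, hcard, Nat.pow_mod]
    simp [h2m]
  haveI hchar : CharP K 2 := hchar2 ▸ ringChar.charP K
  haveI : Fact (Nat.Prime 2) := ⟨by norm_num⟩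
  have htwo : (2 : K) = 0 := by
    have := CharP.cast_eq_zero K 2
    exact_mod_cast this
  have ha : a ≠ 0 := by rintro rfl; exact hab (by ring)
  have hb : b ≠ 0 := by rintro rfl; exact hab (by ring)
  have hq2 : ∀ y : K, (y ^ 2 ^ m) ^ 2 ^ m = y := by
    intro y
    have hexp : 2 ^ m * 2 ^ m = 2 ^ (2 * m) := by
      rw [← pow_add]; ring_nf
    rw [← pow_mul, hexp, ← hcard, FiniteField.pow_card]
  have hbe : a ^ (2 ^ m) * b + a * b ^ (2 ^ m) ≠ 0 := by
    intro h
    apply hnot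
    refine ⟨b / a, ?_, by field_simp⟩
    rw [div_pow, div_eq_div_iff (pow_ne_zero _ ha) ha]
    linear_combination h - a ^ (2 ^ m) * b * htwo
  set P : K[X] := C (b^3*(a^(2^m))^3 + (3:K)*a*b^2*(a^(2^m))^2*b^(2^m) + (3:K)*a^2*b*a^(2^m)*(b^(2^m))^2 + a^3*(b^(2^m))^3) * X ^ 4 + C (b^5*(a^(2^m))^3 + a*b^4*(a^(2^m))^2*b^(2^m) + a*b^4*(a^(2^m))^3 + a^2*b^3*a^(2^m)*(b^(2^m))^2 + (3:K)*a^2*b^3*(a^(2^m))^2*b^(2^m) + a^2*b^3*(a^(2^m))^3 + a^3*b^2*(b^(2^m))^3 + (3:K)*a^3*b^2*a^(2^m)*(b^(2^m))^2 + a^3*b^2*(a^(2^m))^2*b^(2^m) + a^4*b*(b^(2^m))^3 + a^4*b*a^(2^m)*(b^(2^m))^2 + a^5*(b^(2^m))^3) * X ^ 2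
      + C (a*b^5*(a^(2^m))^3 + (2:K)*a^2*b^4*a^(2^m)*(b^(2^m))^2 + a^2*b^4*(a^(2^m))^2*b^(2^m) + a^2*b^4*(a^(2^m))^3 + (3:K)*a^3*b^3*a^(2^m)*(b^(2^m))^2 + (3:K)*a^3*b^3*(a^(2^m))^2*b^(2^m) + a^4*b^2*(b^(2^m))^3 + a^4*b^2*a^(2^m)*(b^(2^m))^2 + (2:K)*a^4*b^2*(a^(2^m))^2*b^(2^m) + a^5*b*(b^(2^m))^3) * X + C (b^7*(a^(2^m))^3 + (3:K)*a*b^6*(a^(2^m))^2*b^(2^m) + (3:K)*a*b^6*(a^(2^m))^3 + (5:K)*a^2*b^5*a^(2^m)*(b^(2^m))^2 + (8:K)*a^2*b^5*(a^(2^m))^2*b^(2^m) + (6:K)*a^2*b^5*(a^(2^m))^3 + (3:K)*a^3*b^4*(b^(2^m))^3 + (11:K)*a^3*b^4*a^(2^m)*(b^(2^m))^2 + (14:K)*a^3*b^4*(a^(2^m))^2*b^(2^m) + (6:K)*a^3*b^4*(a^(2^m))^3 + (6:K)*a^4*b^3*(b^(2^m))^3 + (14:K)*a^4*b^3*a^(2^m)*(b^(2^m))^2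 + (11:K)*a^4*b^3*(a^(2^m))^2*b^(2^m) + (3:K)*a^4*b^3*(a^(2^m))^3 + (6:K)*a^5*b^2*(b^(2^m))^3 + (8:K)*a^5*b^2*a^(2^m)*(b^(2^m))^2 + (5:K)*a^5*b^2*(a^(2^m))^2*b^(2^m) + (3:K)*a^6*b*(b^(2^m))^3 + (3:K)*a^6*b*a^(2^m)*(b^(2^m))^2 + a^7*(b^(2^m))^3) with hPdef
  have hc4 : P.coeff 4 = (b^3*(a^(2^m))^3 + (3:K)*a*b^2*(a^(2^m))^2*b^(2^m) + (3:K)*a^2*b*a^(2^m)*(b^(2^m))^2 + a^3*(b^(2^m))^3) := by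
    rw [hPdef]
    simp only [coeff_add, coeff_C_mul, coeff_X_pow, coeff_X, coeff_C]
    norm_num
  have hP0 : P ≠ 0 := by
    intro h
    have h4 : P.coeff 4 = 0 := by rw [h]; simp
    rw [hc4] at h4
    have : ((b^3*(a^(2^m))^3 + (3:K)*a*b^2*(a^(2^m))^2*b^(2^m) + (3:K)*a^2*b*a^(2^m)*(b^(2^m))^2 + a^3*(b^(2^m))^3) : K) = (a ^ (2 ^ m) * b + a * b ^ (2 ^ m)) ^ 3 := by ring
    rw [this] at h4
    exact pow_ne_zero 3 hbe h4
  have hsub : {x : K | x ^ (2 ^ m + 3) + (x + a) ^ (2 ^ m + 3) + (x + b) ^ (2 ^ m + 3)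
      + (x + a + b) ^ (2 ^ m + 3) = 0} ⊆ (P.roots.toFinset : Set K) := by
    intro x hx
    simp only [Set.mem_setOf_eq] at hx
    rw [pow_add, pow_add, pow_add, pow_add] at hx
    simp only [add_pow_char_pow] at hx
    have h1 : a * b * (a + b) * x ^ (2 ^ m) = (b*a^(2^m) + a*b^(2^m)) * x ^ 2 + (b^2*a^(2^m) + a^2*b^(2^m)) * x + (b^3*a^(2^m) + a*b^2*b^(2^m) + a*b^2*a^(2^m) + a^2*b*b^(2^m) + a^2*b*a^(2^m) + a^3*b^(2^m)) := by
      linear_combination hx + (((-1):K)*b^3*b^(2^m) + ((-1):K)*b^3*a^(2^m) + ((-2):K)*a*b^2*b^(2^m) + ((-2):K)*a*b^2*a^(2^m) + ((-2):K)*a^2*b*b^(2^m) + ((-2):K)*a^2*b*a^(2^m) + ((-1):K)*a^3*b^(2^m) + ((-1):K)*a^3*a^(2^m) + ((-1):K)*x^(2^m)*b^3 + ((-1):K)*x^(2^m)*a*b^2 + ((-1):K)*x^(2^m)*a^2*b + ((-1):K)*x^(2^m)*a^3 + ((-3):K)*x*b^2*b^(2^m) + ((-2):K)*x*b^2*a^(2^m)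 + ((-3):K)*x*a*b*b^(2^m) + ((-3):K)*x*a*b*a^(2^m) + ((-2):K)*x*a^2*b^(2^m) + ((-3):K)*x*a^2*a^(2^m) + ((-3):K)*x*x^(2^m)*b^2 + ((-3):K)*x*x^(2^m)*a*b + ((-3):K)*x*x^(2^m)*a^2 + ((-3):K)*x^2*b*b^(2^m) + ((-2):K)*x^2*b*a^(2^m) + ((-2):K)*x^2*a*b^(2^m) + ((-3):K)*x^2*a*a^(2^m) + ((-3):K)*x^2*x^(2^m)*b + ((-3):K)*x^2*x^(2^m)*a + ((-1):K)*x^3*b^(2^m) + ((-1):K)*x^3*a^(2^m) + ((-2):K)*x^3*x^(2^m)) * htwo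
    have h2 : (a^(2^m)*(b^(2^m))^2 + (a^(2^m))^2*b^(2^m)) * x = (b*a^(2^m)*(b^(2^m))^2 + b*(a^(2^m))^2*b^(2^m) + b*(a^(2^m))^3 + a*(b^(2^m))^3 + a*a^(2^m)*(b^(2^m))^2 + a*(a^(2^m))^2*b^(2^m) + x^(2^m)*b*(a^(2^m))^2 + x^(2^m)*a*(b^(2^m))^2 + (x^(2^m))^2*b*a^(2^m) + (x^(2^m))^2*a*b^(2^m)) := by
      have h := congrArg (iterateFrobenius K 2 m) h1
      simp only [map_mul, map_add, map_pow, iterateFrobenius_def, hq2] at h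
      linear_combination h
    have key : (b^3*(a^(2^m))^3 + (3:K)*a*b^2*(a^(2^m))^2*b^(2^m) + (3:K)*a^2*b*a^(2^m)*(b^(2^m))^2 + a^3*(b^(2^m))^3) * x ^ 4 + (b^5*(a^(2^m))^3 + a*b^4*(a^(2^m))^2*b^(2^m) + a*b^4*(a^(2^m))^3 + a^2*b^3*a^(2^m)*(b^(2^m))^2 + (3:K)*a^2*b^3*(a^(2^m))^2*b^(2^m) + a^2*b^3*(a^(2^m))^3 + a^3*b^2*(b^(2^m))^3 + (3:K)*a^3*b^2*a^(2^m)*(b^(2^m))^2 + a^3*b^2*(a^(2^m))^2*b^(2^m) + a^4*b*(b^(2^m))^3 + a^4*b*a^(2^m)*(b^(2^m))^2 + a^5*(b^(2^m))^3) * x ^ 2 + (a*b^5*(a^(2^m))^3 + (2:K)*a^2*b^4*a^(2^m)*(b^(2^m))^2 + a^2*b^4*(a^(2^m))^2*b^(2^m) + a^2*b^4*(a^(2^m))^3 + (3:K)*a^3*b^3*a^(2^m)*(b^(2^m))^2 + (3:K)*a^3*b^3*(a^(2^m))^2*b^(2^m) + a^4*b^2*(b^(2^m))^3 + a^4*b^2*a^(2^m)*(b^(2^m))^2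 + (2:K)*a^4*b^2*(a^(2^m))^2*b^(2^m) + a^5*b*(b^(2^m))^3) * x + (b^7*(a^(2^m))^3 + (3:K)*a*b^6*(a^(2^m))^2*b^(2^m) + (3:K)*a*b^6*(a^(2^m))^3 + (5:K)*a^2*b^5*a^(2^m)*(b^(2^m))^2 + (8:K)*a^2*b^5*(a^(2^m))^2*b^(2^m) + (6:K)*a^2*b^5*(a^(2^m))^3 + (3:K)*a^3*b^4*(b^(2^m))^3 + (11:K)*a^3*b^4*a^(2^m)*(b^(2^m))^2 + (14:K)*a^3*b^4*(a^(2^m))^2*b^(2^m) + (6:K)*a^3*b^4*(a^(2^m))^3 + (6:K)*a^4*b^3*(b^(2^m))^3 + (14:K)*a^4*b^3*a^(2^m)*(b^(2^m))^2 + (11:K)*a^4*b^3*(a^(2^m))^2*b^(2^m) + (3:K)*a^4*b^3*(a^(2^m))^3 + (6:K)*a^5*b^2*(b^(2^m))^3 + (8:K)*a^5*b^2*a^(2^m)*(b^(2^m))^2 + (5:K)*a^5*b^2*(a^(2^m))^2*b^(2^m) + (3:K)*a^6*b*(b^(2^m))^3 + (3:K)*a^6*b*a^(2^m)*(b^(2^m))^2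 + a^7*(b^(2^m))^3) = 0 := by
      linear_combination (((-1):K)*b^4*(a^(2^m))^2 + ((-2):K)*a*b^3*a^(2^m)*b^(2^m) + ((-2):K)*a*b^3*(a^(2^m))^2 + ((-2):K)*a^2*b^2*(b^(2^m))^2 + ((-2):K)*a^2*b^2*a^(2^m)*b^(2^m) + ((-2):K)*a^2*b^2*(a^(2^m))^2 + ((-2):K)*a^3*b*(b^(2^m))^2 + ((-2):K)*a^3*b*a^(2^m)*b^(2^m) + ((-1):K)*a^4*(b^(2^m))^2 + ((-1):K)*x^(2^m)*a*b^3*a^(2^m) + ((-1):K)*x^(2^m)*a^2*b^2*b^(2^m) + ((-1):K)*x^(2^m)*a^2*b^2*a^(2^m) + ((-1):K)*x^(2^m)*a^3*b*b^(2^m) + ((-1):K)*x*b^3*(a^(2^m))^2 + ((-1):K)*x*a*b^2*a^(2^m)*b^(2^m) + ((-1):K)*x*a^2*b*a^(2^m)*b^(2^m) + ((-1):K)*x*a^3*(b^(2^m))^2 + ((-1):K)*x^2*b^2*(a^(2^m))^2 + ((-2):K)*x^2*a*b*a^(2^m)*b^(2^m) + ((-1):K)*x^2*a^2*(b^(2^m))^2)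 * h1 + (((-1):K)*a^2*b^4 + ((-2):K)*a^3*b^3 + ((-1):K)*a^4*b^2) * h2 + (((-1):K)*x*b^6*(a^(2^m))^3 + ((-2):K)*x*a*b^5*(a^(2^m))^2*b^(2^m) + ((-1):K)*x*a*b^5*(a^(2^m))^3 + ((-2):K)*x*a^2*b^4*(a^(2^m))^2*b^(2^m) + ((-1):K)*x*a^2*b^4*(a^(2^m))^3 + ((-1):K)*x*a^3*b^3*a^(2^m)*(b^(2^m))^2 + ((-1):K)*x*a^3*b^3*(a^(2^m))^2*b^(2^m) + ((-1):K)*x*a^4*b^2*(b^(2^m))^3 + ((-2):K)*x*a^4*b^2*a^(2^m)*(b^(2^m))^2 + ((-1):K)*x*a^5*b*(b^(2^m))^3 + ((-2):K)*x*a^5*b*a^(2^m)*(b^(2^m))^2 + ((-1):K)*x*a^6*(b^(2^m))^3 + ((-1):K)*x^2*b^5*(a^(2^m))^3 + ((-3):K)*x^2*a*b^4*(a^(2^m))^2*b^(2^m) + ((-1):K)*x^2*a*b^4*(a^(2^m))^3 + ((-3):K)*x^2*a^2*b^3*a^(2^m)*(b^(2^m))^2 + ((-3):K)*x^2*a^2*b^3*(a^(2^m))^2*b^(2^m)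 + ((-1):K)*x^2*a^2*b^3*(a^(2^m))^3 + ((-1):K)*x^2*a^3*b^2*(b^(2^m))^3 + ((-3):K)*x^2*a^3*b^2*a^(2^m)*(b^(2^m))^2 + ((-3):K)*x^2*a^3*b^2*(a^(2^m))^2*b^(2^m) + ((-1):K)*x^2*a^4*b*(b^(2^m))^3 + ((-3):K)*x^2*a^4*b*a^(2^m)*(b^(2^m))^2 + ((-1):K)*x^2*a^5*(b^(2^m))^3 + ((-1):K)*x^3*b^4*(a^(2^m))^3 + ((-2):K)*x^3*a*b^3*(a^(2^m))^2*b^(2^m) + ((-1):K)*x^3*a^2*b^2*a^(2^m)*(b^(2^m))^2 + ((-1):K)*x^3*a^2*b^2*(a^(2^m))^2*b^(2^m) + ((-2):K)*x^3*a^3*b*a^(2^m)*(b^(2^m))^2 + ((-1):K)*x^3*a^4*(b^(2^m))^3) * htwo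
    simp only [Finset.coe_sort_coe, Finset.mem_coe, Multiset.mem_toFinset,
      mem_roots hP0, IsRoot.def]
    rw [hPdef]
    simp only [eval_add, eval_mul, eval_pow, eval_C, eval_X]
    linear_combination key
  calc {x : K | x ^ (2 ^ m + 3) + (x + a) ^ (2 ^ m + 3) + (x + b) ^ (2 ^ m + 3)
      + (x + a + b) ^ (2 ^ m + 3) = 0}.ncard
      ≤ (P.roots.toFinset : Set K).ncard := Set.ncard_le_ncard hsub (Finset.finite_toSet _)
    _ = P.roots.toFinset.card := Set.ncard_coe_finset _
    _ ≤ Multiset.card P.roots := Multiset.toFinset_card_le _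
    _ ≤ P.natDegree := P.card_roots'
    _ ≤ 4 := by rw [hPdef]; compute_degree
end

section
/- Let m > 2 be an integer, n = 2m, and let a, b ∈ F_{2^n}^* with a ≠ b and a^3 = b^3. Then the number of x ∈ F_{2^n} satisfying x^{2^m+5} + (x+a)^{2^m+5} + (x+b)^{2^m+5} + (x+a+b)^{2^m+5} = 0 is exactly 4 if m is odd, and 0 if m is even. Moreover, when m is odd the four solutions are x = 0, a, b, a+b. -/
private lemma two_pow_mod_three (m : ℕ) : 2 ^ m % 3 = if Even m then 1 else 2 := by
  induction m with
  | zero => simp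
  | succ n ih =>
    rw [pow_succ, Nat.mul_mod, ih]
    by_cases h : Even n <;> simp [h, Nat.even_add_one]

private lemma keyid_odd {K : Type*} [Field K] (htwo : (2:K) = 0) (x y a w p : K)
    (hg : w^2 + w + 1 = 0) :
    y * x^5 + (y + p) * (x+a)^5 + (y + w^2*p) * (x + w*a)^5
      + (y + p + w^2*p) * (x + a + w*a)^5
    = p * a * (x * (x+a) * (x + w*a) * (x + a + w*a)) := by
  linear_combination ((2:K)*a^5*p + (3:K)*a^5*w*p + (6:K)*a^5*w^2*p + (6:K)*a^5*w^3*p + (3:K)*a^5*w^4*p + (2:K)*a^5*w^5*p + (2:K)*y*a^5 + (5:K)*y*a^5*w + (3:K)*y*a^5*w^2 + (2:K)*y*a^5*w^3 + (4:K)*x*a^4*p + (15:K)*x*a^4*w*p + (15:K)*x*a^4*w^2*p + (10:K)*x*a^4*w^3*p + (10:K)*x*a^4*w^4*p + (10:K)*x*y*a^4 + (10:K)*x*y*a^4*w + (10:K)*x*y*a^4*w^2 + (19:K)*x^2*a^3*p + (10:K)*x^2*a^3*w*p + (10:K)*x^2*a^3*w^2*p + (20:K)*x^2*a^3*w^3*p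 + (10:K)*x^2*y*a^3 + (20:K)*x^2*y*a^3*w + (20:K)*x^3*a^2*w^2*p + (20:K)*x^3*y*a^2 + (-5:K)*x^4*a*p + (10:K)*x^4*a*w*p + (2:K)*x^5*p) * hg
    + ((-1:K)*y*a^5*w + (3:K)*x*a^4*p + (-1:K)*x^2*a^3*w*p + (5:K)*x^2*y*a^3 + (9:K)*x^3*a^2*p + (9:K)*x^3*a^2*w*p + (7:K)*x^4*a*p + (5:K)*x^4*y*a + (5:K)*x^4*y*a*w + (-1:K)*x^5*w*p + (2:K)*x^5*y) * htwo

private lemma keyid_even {K : Type*} [Field K] (htwo : (2:K) = 0) (x y a w p : K)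
    (hg : w^2 + w + 1 = 0) :
    y * x^5 + (y + p) * (x+a)^5 + (y + w*p) * (x + w*a)^5
      + (y + p + w*p) * (x + a + w*a)^5
    = p * a^5 := by
  linear_combination ((-1:K)*a^5*p + (7:K)*a^5*w*p + (9:K)*a^5*w^2*p + (4:K)*a^5*w^3*p + (2:K)*a^5*w^4*p + (2:K)*y*a^5 + (5:K)*y*a^5*w + (3:K)*y*a^5*w^2 + (2:K)*y*a^5*w^3 + (10:K)*x*a^4*p + (25:K)*x*a^4*w*p + (15:K)*x*a^4*w^2*p + (10:K)*x*a^4*w^3*p + (10:K)*x*y*a^4 + (10:K)*x*y*a^4*w + (10:K)*x*y*a^4*w^2 + (20:K)*x^2*a^3*p + (20:K)*x^2*a^3*w*p + (20:K)*x^2*a^3*w^2*p + (10:K)*x^2*y*a^3 + (20:K)*x^2*y*a^3*w + (10:K)*x^3*a^2*p + (20:K)*x^3*a^2*w*p + (20:K)*x^3*y*a^2 + (10:K)*x^4*a*p) * hg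
    + ((1:K)*a^5*p + (-1:K)*y*a^5*w + (-5:K)*x*a^4*w*p + (5:K)*x^2*y*a^3 + (5:K)*x^3*a^2*p + (5:K)*x^4*y*a + (5:K)*x^4*y*a*w + (1:K)*x^5*p + (1:K)*x^5*w*p + (2:K)*x^5*y) * htwo

theorem stmt_3 (m : ℕ) (hm : 2 < m) (K : Type*) [Field K] [Fintype K]
    (hcard : Fintype.card K = 2 ^ (2 * m)) (a b : K)
    (ha : a ≠ 0) (hb : b ≠ 0) (hne : a ≠ b) (hcube : a ^ 3 = b ^ 3) :
    (Odd m →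
      {x : K | x ^ (2 ^ m + 5) + (x + a) ^ (2 ^ m + 5) + (x + b) ^ (2 ^ m + 5)
        + (x + a + b) ^ (2 ^ m + 5) = 0}.ncard = 4 ∧
      {x : K | x ^ (2 ^ m + 5) + (x + a) ^ (2 ^ m + 5) + (x + b) ^ (2 ^ m + 5)
        + (x + a + b) ^ (2 ^ m + 5) = 0} = {0, a, b, a + b}) ∧
    (Even m →
      {x : K | x ^ (2 ^ m + 5) + (x + a) ^ (2 ^ m + 5) + (x + b) ^ (2 ^ m + 5)
        + (x + a + b) ^ (2 ^ m + 5) = 0}.ncard = 0) := by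
  -- characteristic 2
  haveI hF2 : Fact (Nat.Prime 2) := ⟨Nat.prime_two⟩
  have hchar2 : ringChar K = 2 := by
    obtain ⟨n, hp, hc⟩ := FiniteField.card K (ringChar K)
    have hdvd : ringChar K ∣ 2 ^ (2 * m) := by
      rw [← hcard, hc]
      exact dvd_pow_self _ (by positivity)
    have := hp.dvd_of_dvd_pow hdvd
    exact (Nat.prime_dvd_prime_iff_eq hp Nat.prime_two).mp this
  haveI hKchar : CharP K 2 := hchar2 ▸ ringChar.charP K
  have htwo : (2 : K) = 0 := by
    have := CharP.cast_eq_zero K 2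
    exact_mod_cast this
  -- the cube root of unity
  obtain ⟨w, hbw, hw3, hg⟩ : ∃ w : K, b = w * a ∧ w ^ 3 = 1 ∧ w^2 + w + 1 = 0 := by
    refine ⟨b * a⁻¹, by field_simp, ?_, ?_⟩
    · field_simp
      exact hcube.symm
    · have hw3 : (b * a⁻¹) ^ 3 = 1 := by
        field_simp
        exact hcube.symm
      have hfac : (b * a⁻¹ - 1) * ((b * a⁻¹)^2 + (b * a⁻¹) + 1) = 0 := by
        linear_combination hw3
      rcases mul_eq_zero.mp hfac with h | h
      · exfalso
        apply hne
        have : b * a⁻¹ = 1 := by linear_combination h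
        have := congrArg (· * a) this
        simpa [mul_assoc, inv_mul_cancel₀ ha] using this.symm
      · exact h
  have hane : a + b ≠ 0 := fun h => hne (by linear_combination h - b * htwo)
  constructor
  · -- odd case
    intro hodd
    have hmod : 2 ^ m % 3 = 2 := by
      rw [two_pow_mod_three, if_neg (by simpa using Nat.not_even_iff_odd.mpr hodd)]
    have hwq : w ^ (2 ^ m) = w ^ 2 := by
      rw [pow_eq_pow_mod _ hw3, hmod]
    have hbq : b ^ (2 ^ m) = w ^ 2 * a ^ (2 ^ m) := by
      rw [hbw, mul_pow, hwq]
    have key : ∀ x : K, x ^ (2 ^ m + 5) + (x + a) ^ (2 ^ m + 5) + (x + b) ^ (2 ^ m + 5)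
        + (x + a + b) ^ (2 ^ m + 5)
        = a ^ (2 ^ m) * a * (x * (x + a) * (x + b) * (x + a + b)) := by
      intro x
      rw [hbw]
      simp only [pow_add, add_pow_char_pow (p := 2) (n := m), mul_pow, hwq]
      generalize a ^ (2 ^ m) = p
      generalize x ^ (2 ^ m) = y
      linear_combination keyid_odd htwo x y a w p hg
    have hPa : a ^ (2 ^ m) * a ≠ 0 := mul_ne_zero (pow_ne_zero _ ha) ha
    have hchar : {x : K | x ^ (2 ^ m + 5) + (x + a) ^ (2 ^ m + 5) + (x + b) ^ (2 ^ m + 5)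
        + (x + a + b) ^ (2 ^ m + 5) = 0} = ({0, a, b, a + b} : Set K) := by
      ext x
      simp only [Set.mem_setOf_eq, Set.mem_insert_iff, Set.mem_singleton_iff]
      rw [key x]
      constructor
      · intro h
        have h4 : x = 0 ∨ x + a = 0 ∨ x + b = 0 ∨ x + a + b = 0 := by
          rcases mul_eq_zero.mp h with h' | h'
          · exact absurd h' hPa
          · simpa [mul_eq_zero, or_assoc] using h'
        rcases h4 with h | h | h | h
        · exact Or.inl h
        · exact Or.inr (Or.inl (by linear_combination h - a * htwo))
        · exact Or.inr (Or.inr (Or.inl (by linear_combination h - b * htwo)))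
        · exact Or.inr (Or.inr (Or.inr (by linear_combination h - (a + b) * htwo)))
      · intro h
        rcases h with h | h | h | h <;> rw [h]
        · ring
        · linear_combination (a ^ (2 ^ m) * a * a * a * (a + b) * (a + a + b)) * htwo
        · linear_combination (a ^ (2 ^ m) * a * b * (b + a) * b * (b + a + b)) * htwo
        · linear_combination (a ^ (2 ^ m) * a * ((a + b) * (a + b + a) * (a + b + b) * (a + b))) * htwo
    refine ⟨?_, hchar⟩
    rw [hchar]
    have n0 : (0 : K) ∉ ({a, b, a + b} : Set K) := by
      simp only [Set.mem_insert_iff, Set.mem_singleton_iff]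
      push_neg
      exact ⟨Ne.symm ha, Ne.symm hb, Ne.symm hane⟩
    have na : a ∉ ({b, a + b} : Set K) := by
      simp only [Set.mem_insert_iff, Set.mem_singleton_iff]
      push_neg
      exact ⟨hne, fun h => hb (by linear_combination -h)⟩
    have nb : b ∉ ({a + b} : Set K) := by
      simp only [Set.mem_singleton_iff]
      exact fun h => ha (by linear_combination -h)
    rw [Set.ncard_insert_of_notMem n0 (Set.toFinite _),
      Set.ncard_insert_of_notMem na (Set.toFinite _),
      Set.ncard_insert_of_notMem nb (Set.toFinite _), Set.ncard_singleton]
  · -- even case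
    intro heven
    have hmod : 2 ^ m % 3 = 1 := by
      rw [two_pow_mod_three, if_pos heven]
    have hwq : w ^ (2 ^ m) = w := by
      rw [pow_eq_pow_mod _ hw3, hmod, pow_one]
    have hbq : b ^ (2 ^ m) = w * a ^ (2 ^ m) := by
      rw [hbw, mul_pow, hwq]
    have key : ∀ x : K, x ^ (2 ^ m + 5) + (x + a) ^ (2 ^ m + 5) + (x + b) ^ (2 ^ m + 5)
        + (x + a + b) ^ (2 ^ m + 5) = a ^ (2 ^ m) * a ^ 5 := by
      intro x
      rw [hbw]
      simp only [pow_add, add_pow_char_pow (p := 2) (n := m), mul_pow, hwq]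
      generalize a ^ (2 ^ m) = p
      generalize x ^ (2 ^ m) = y
      linear_combination keyid_even htwo x y a w p hg
    have hempty : {x : K | x ^ (2 ^ m + 5) + (x + a) ^ (2 ^ m + 5) + (x + b) ^ (2 ^ m + 5)
        + (x + a + b) ^ (2 ^ m + 5) = 0} = (∅ : Set K) := by
      ext x
      simp only [Set.mem_setOf_eq, Set.mem_empty_iff_false, iff_false]
      rw [key x]
      exact mul_ne_zero (pow_ne_zero _ ha) (pow_ne_zero _ ha)
    rw [hempty, Set.ncard_empty]
end

section
/- Let p be an odd prime, n a positive integer, 1 ≤ k < n, and s = gcd(n,k). Let F(x) = x^{p^k+1} on F_{p^n}. Then for all a, b ∈ F_{p^n}: ∇_F(a,b) = p^n if ab = 0, or if ab ≠ 0, (a/b)^2 ∈ F_{p^s} and a/b ∉ F_{p^s}; and ∇_F(a,b) = 0 otherwise. In particular, the second-order zero differential uniformity of F is p^n whenever there exist a, b ∈ F_{p^n}^* with (a/b)^2 ∈ F_{p^s} and a/b ∉ F_{p^s}. -/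
/-- Second-order zero differential spectrum entry for `F = x^d`. -/
noncomputable def nablaCount {K : Type*} [Field K] (d : ℕ) (a b : K) : ℕ :=
  {x : K | (x + a + b) ^ d - (x + a) ^ d - (x + b) ^ d + x ^ d = 0}.ncard

/-- Closure of fixed exponents under multiples. -/
lemma pow_pow_mul_fix {K : Type*} [Monoid K] (p s : ℕ) (x : K) (h : x ^ p ^ s = x) :
    ∀ m, x ^ p ^ (s * m) = x := by
  intro m
  induction m with
  | zero => simp
  | succ m ih =>
    have : s * (m + 1) = s * m + s := by ring
    rw [this, pow_add, pow_mul, ih, h]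

/-- Signed version: if `x^(p^s) = -x` then `x^(p^(s*m)) = (-1)^m * x`. -/
lemma pow_pow_mul_neg_fix {K : Type*} [Field K] (p s : ℕ) (hps : Odd (p ^ s)) (x : K)
    (h : x ^ p ^ s = -x) : ∀ m, x ^ p ^ (s * m) = (-1) ^ m * x := by
  intro m
  induction m with
  | zero => simp
  | succ m ih =>
    have hm : s * (m + 1) = s * m + s := by ring
    rw [hm, pow_add, pow_mul, ih, mul_pow, ← pow_mul, mul_comm m (p ^ s), pow_mul,
      hps.neg_one_pow, h, pow_succ]
    ring

/-- gcd closure of fixed exponents. -/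
lemma pow_pow_gcd_fix {K : Type*} [Monoid K] (p : ℕ) (x : K) :
    ∀ a b : ℕ, x ^ p ^ a = x → x ^ p ^ b = x → x ^ p ^ Nat.gcd a b = x := by
  intro a b
  induction a, b using Nat.gcd.induction with
  | H0 b => intro _ h2; simpa using h2
  | H1 a b ha ih =>
    intro h1 h2
    rw [Nat.gcd_rec]
    refine ih ?_ h1
    have hb : b = a * (b / a) + b % a := by
      rw [Nat.add_comm, Nat.mod_add_div]
    have hmul : x ^ p ^ (a * (b / a)) = x := pow_pow_mul_fix p a x h1 _
    calc x ^ p ^ (b % a) = (x ^ p ^ (a * (b / a))) ^ p ^ (b % a) := by rw [hmul]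
    _ = x ^ p ^ b := by rw [← pow_mul, ← pow_add, ← hb]
    _ = x := h2

theorem stmt_6 (p : ℕ) (hp : p.Prime) (hodd : Odd p) (n k s : ℕ) (hn : 0 < n)
    (hk1 : 1 ≤ k) (hkn : k < n) (hs : s = Nat.gcd n k)
    (K : Type*) [Field K] [Fintype K] (hcard : Fintype.card K = p ^ n) :
    (∀ a b : K,
      ((a * b = 0 ∨ (a * b ≠ 0 ∧ ((a / b) ^ 2) ^ (p ^ s) = (a / b) ^ 2 ∧
          ¬ (a / b) ^ (p ^ s) = a / b)) →
        nablaCount (p ^ k + 1) a b = p ^ n) ∧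
      (¬ (a * b = 0 ∨ (a * b ≠ 0 ∧ ((a / b) ^ 2) ^ (p ^ s) = (a / b) ^ 2 ∧
          ¬ (a / b) ^ (p ^ s) = a / b)) →
        nablaCount (p ^ k + 1) a b = 0)) ∧
    ((∃ a b : K, a ≠ 0 ∧ b ≠ 0 ∧ ((a / b) ^ 2) ^ (p ^ s) = (a / b) ^ 2 ∧
        ¬ (a / b) ^ (p ^ s) = a / b) →
      IsGreatest {c : ℕ | ∃ a b : K, a ≠ 0 ∧ b ≠ 0 ∧
        c = nablaCount (p ^ k + 1) a b} (p ^ n)) := by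
  haveI hpfact : Fact p.Prime := ⟨hp⟩
  -- the characteristic of K is p
  haveI hchar : CharP K p := by
    haveI : CharP K (ringChar K) := ringChar.charP K
    obtain ⟨m, hq, hc⟩ := FiniteField.card K (ringChar K)
    have hdvd : ringChar K ∣ p ^ n := by
      rw [← hcard, hc]; exact dvd_pow_self _ (by positivity)
    have : ringChar K = p := by
      rcases hq.prime.dvd_of_dvd_pow hdvd with h
      exact ((Nat.prime_dvd_prime_iff_eq hq hp).mp h)
    rwa [this] at ‹CharP K (ringChar K)›
  have hp2 : p ≠ 2 := by rintro rfl; exact (Nat.not_odd_iff_even.mpr (by norm_num)) hodd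
  have hring : ringChar K = p := ringChar.eq K p
  have h2ne : (2 : K) ≠ 0 := Ring.two_ne_zero (by rw [hring]; exact hp2)
  have hneg1 : (-1 : K) ≠ 1 := Ring.neg_one_ne_one_of_char_ne_two (by rw [hring]; exact hp2)
  have hsdvd_n : s ∣ n := hs ▸ Nat.gcd_dvd_left n k
  have hsdvd_k : s ∣ k := hs ▸ Nat.gcd_dvd_right n k
  have hspos : 0 < s := by
    rw [hs]; exact Nat.gcd_pos_of_pos_right n hk1
  have hps_odd : Odd (p ^ s) := hodd.pow
  have hpowcard : ∀ x : K, x ^ p ^ n = x := by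
    intro x; rw [← hcard]; exact FiniteField.pow_card x
  -- the key identity: the second-order difference is constant
  have hfrob : ∀ u v : K, (u + v) ^ p ^ k = u ^ p ^ k + v ^ p ^ k := fun u v =>
    add_pow_char_pow (x := u) (y := v) p k
  have key : ∀ x a b : K,
      (x + a + b) ^ (p ^ k + 1) - (x + a) ^ (p ^ k + 1) - (x + b) ^ (p ^ k + 1)
        + x ^ (p ^ k + 1) = a ^ p ^ k * b + a * b ^ p ^ k := by
    intro x a b
    simp only [pow_succ, hfrob]
    ring
  -- counting lemma
  have hmain : ∀ a b : K,
      (a ^ p ^ k * b + a * b ^ p ^ k = 0 → nablaCount (p ^ k + 1) a b = p ^ n) ∧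
      (a ^ p ^ k * b + a * b ^ p ^ k ≠ 0 → nablaCount (p ^ k + 1) a b = 0) := by
    intro a b
    constructor
    · intro h
      have hset : {x : K | (x + a + b) ^ (p ^ k + 1) - (x + a) ^ (p ^ k + 1)
          - (x + b) ^ (p ^ k + 1) + x ^ (p ^ k + 1) = 0} = Set.univ := by
        ext x; simp [key x a b, h]
      rw [nablaCount, hset, Set.ncard_univ, Nat.card_eq_fintype_card, hcard]
    · intro h
      have hset : {x : K | (x + a + b) ^ (p ^ k + 1) - (x + a) ^ (p ^ k + 1)
          - (x + b) ^ (p ^ k + 1) + x ^ (p ^ k + 1) = 0} = ∅ := by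
        ext x; simp [key x a b, h]
      rw [nablaCount, hset, Set.ncard_empty]
  -- condition equivalence
  have hcond : ∀ a b : K,
      (a * b = 0 ∨ (a * b ≠ 0 ∧ ((a / b) ^ 2) ^ (p ^ s) = (a / b) ^ 2 ∧
        ¬ (a / b) ^ (p ^ s) = a / b)) ↔ a ^ p ^ k * b + a * b ^ p ^ k = 0 := by
    intro a b
    constructor
    · rintro (hab | ⟨hab, h2, h1⟩)
      · rcases mul_eq_zero.mp hab with h | h <;>
          simp [h, zero_pow (pow_ne_zero k hp.ne_zero)]
      · have ha : a ≠ 0 := fun h => hab (by simp [h])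
        have hb : b ≠ 0 := fun h => hab (by simp [h])
        set t := a / b with htdef
        have ht0 : t ≠ 0 := div_ne_zero ha hb
        -- t^(p^s) = -t
        have hsq : (t ^ p ^ s - t) * (t ^ p ^ s + t) = 0 := by
          have h2' : (t ^ p ^ s) ^ 2 = t ^ 2 := by
            rw [← pow_mul, mul_comm, pow_mul]; exact h2
          linear_combination h2'
        have hts : t ^ p ^ s = -t := by
          rcases mul_eq_zero.mp hsq with h | h
          · exact absurd (sub_eq_zero.mp h) h1
          · linear_combination h
        -- n/s is even
        have hnn : t ^ p ^ (s * (n / s)) = (-1) ^ (n / s) * t :=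
          pow_pow_mul_neg_fix p s hps_odd t hts (n / s)
        rw [Nat.mul_div_cancel' hsdvd_n, hpowcard] at hnn
        have hn_even : Even (n / s) := by
          rcases Nat.even_or_odd (n / s) with h | h
          · exact h
          · exfalso
            rw [h.neg_one_pow] at hnn
            apply ht0
            have : -t = t := by linear_combination -hnn
            exact (Ring.eq_self_iff_eq_zero_of_char_ne_two (by rw [hring]; exact hp2)).mp this
        -- k/s is odd
        have hcop : Nat.Coprime (n / s) (k / s) := by
          rw [hs]; exact Nat.coprime_div_gcd_div_gcd (hs ▸ hspos)
        have hk_odd : Odd (k / s) := by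
          rcases Nat.even_or_odd (k / s) with h | h
          · exfalso
            have : (2 : ℕ) ∣ Nat.gcd (n / s) (k / s) :=
              Nat.dvd_gcd hn_even.two_dvd h.two_dvd
            rw [hcop] at this
            norm_num at this
          · exact h
        -- conclude t^(p^k) = -t
        have htk : t ^ p ^ k = -t := by
          have := pow_pow_mul_neg_fix p s hps_odd t hts (k / s)
          rw [Nat.mul_div_cancel' hsdvd_k, hk_odd.neg_one_pow] at this
          linear_combination this
        -- back to a, b
        have hh : (a / b) ^ p ^ k = -(a / b) := htk
        rw [div_pow] at hh
        field_simp at hh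
        linear_combination hh
    · intro hexpr
      by_cases hab : a * b = 0
      · exact Or.inl hab
      · right
        refine ⟨hab, ?_, ?_⟩
        · -- (t^2)^(p^s) = t^2
          have ha : a ≠ 0 := fun h => hab (by simp [h])
          have hb : b ≠ 0 := fun h => hab (by simp [h])
          set t := a / b with htdef
          have htk : t ^ p ^ k = -t := by
            rw [htdef, div_pow]
            field_simp
            linear_combination hexpr
          have h1 : (t ^ 2) ^ p ^ k = t ^ 2 := by
            rw [← pow_mul, mul_comm, pow_mul, htk]; ring
          have h2 : (t ^ 2) ^ p ^ n = t ^ 2 := hpowcard _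
          have := pow_pow_gcd_fix p (t ^ 2) n k h2 h1
          rwa [← hs] at this
        · -- t^(p^s) ≠ t
          intro hts
          have ha : a ≠ 0 := fun h => hab (by simp [h])
          have hb : b ≠ 0 := fun h => hab (by simp [h])
          set t := a / b with htdef
          have ht0 : t ≠ 0 := div_ne_zero ha hb
          have htk : t ^ p ^ k = -t := by
            rw [htdef, div_pow]
            field_simp
            linear_combination hexpr
          have : t ^ p ^ (s * (k / s)) = t := pow_pow_mul_fix p s t hts (k / s)
          rw [Nat.mul_div_cancel' hsdvd_k, htk] at this
          exact ht0 ((Ring.eq_self_iff_eq_zero_of_char_ne_two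
            (by rw [hring]; exact hp2)).mp this)
  refine ⟨fun a b => ⟨fun h => (hmain a b).1 ((hcond a b).mp h),
    fun h => (hmain a b).2 (fun he => h ((hcond a b).mpr he))⟩, ?_⟩
  rintro ⟨a, b, ha, hb, h2, h1⟩
  constructor
  · refine ⟨a, b, ha, hb, ?_⟩
    have hab : a * b ≠ 0 := mul_ne_zero ha hb
    exact ((hmain a b).1 ((hcond a b).mp (Or.inr ⟨hab, h2, h1⟩))).symm
  · rintro c ⟨a', b', _, _, rfl⟩
    have : nablaCount (p ^ k + 1) a' b' ≤ Nat.card K := by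
      rw [nablaCount, ← Set.ncard_univ K]
      exact Set.ncard_le_ncard (Set.subset_univ _) Set.finite_univ
    rwa [Nat.card_eq_fintype_card, hcard] at this
end

section
/- Let p be an odd prime, n a positive integer, 1 ≤ k < n, and s = gcd(n,k). For u ∈ F_{p^n}^*, one has u^{p^k − 1} = −1 if and only if u^2 ∈ F_{p^s} and u ∉ F_{p^s}. -/
private lemma aux_sign_mul_pow {K : Type*} [Field K] {ε u : K} (hε : ε * ε = 1)
    {m : ℕ} (hm : Odd m) : (ε * u) ^ m = ε * u ^ m := by
  obtain ⟨j, hj⟩ := hm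
  subst hj
  have h1 : ε ^ (2 * j + 1) = (ε * ε) ^ j * ε := by ring
  rw [mul_pow, h1, hε, one_pow, one_mul]

private lemma aux_iter {K : Type*} [Field K] {p : ℕ} (hp : Odd p) {ε u : K}
    (hε : ε * ε = 1) {a : ℕ} (h : u ^ p ^ a = ε * u) (q : ℕ) :
    u ^ p ^ (a * q) = ε ^ q * u := by
  induction q with
  | zero => simp
  | succ q ih =>
      have h1 : ε ^ q * ε ^ q = 1 := by rw [← mul_pow, hε, one_pow]
      have : u ^ p ^ (a * (q + 1)) = (u ^ p ^ (a * q)) ^ p ^ a := by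
        rw [← pow_mul, ← pow_add, Nat.mul_add, Nat.mul_one]
      rw [this, ih, aux_sign_mul_pow h1 (hp.pow), h]
      ring

private lemma aux_gcd {K : Type*} [Field K] {p : ℕ} (hp : Odd p) (u : K) :
    ∀ m n : ℕ, (∃ ε : K, ε * ε = 1 ∧ u ^ p ^ m = ε * u) →
      (∃ ε : K, ε * ε = 1 ∧ u ^ p ^ n = ε * u) →
      (∃ ε : K, ε * ε = 1 ∧ u ^ p ^ Nat.gcd m n = ε * u) := by
  intro m n
  induction m, n using Nat.gcd.induction with
  | H0 n => intro _ h; simpa using h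
  | H1 m n hm ih =>
      intro hPm hPn
      rw [Nat.gcd_rec]
      apply ih _ hPm
      -- show property for n % m
      obtain ⟨ε, hε, hεm⟩ := hPm
      obtain ⟨ε', hε', hεn⟩ := hPn
      -- u ^ p ^ (m * (n / m)) = ε ^ (n/m) * u
      have h1 := aux_iter hp hε hεm (n / m)
      refine ⟨ε ^ (n / m) * ε', by rw [mul_mul_mul_comm, hε', ← mul_pow, hε, one_pow, mul_one], ?_⟩
      have hsplit : u ^ p ^ n = (u ^ p ^ (m * (n / m))) ^ p ^ (n % m) := by
        rw [← pow_mul, ← pow_add, Nat.div_add_mod]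
      have h2 : ε ^ (n / m) * ε ^ (n / m) = 1 := by rw [← mul_pow, hε, one_pow]
      rw [hεn, h1, aux_sign_mul_pow h2 hp.pow] at hsplit
      -- hsplit : ε' * u = ε^(n/m) * u ^ p ^ (n % m)
      have : ε ^ (n / m) * (ε' * u) = ε ^ (n / m) * (ε ^ (n / m) * u ^ p ^ (n % m)) := by
        rw [hsplit]
      rw [← mul_assoc, ← mul_assoc, h2, one_mul] at this
      rw [← this]

theorem stmt_7 (p : ℕ) (hp : p.Prime) (hodd : Odd p) (n k s : ℕ) (hn : 0 < n)
    (hk1 : 1 ≤ k) (hkn : k < n) (hs : s = Nat.gcd n k)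
    (K : Type*) [Field K] [Fintype K] (hcard : Fintype.card K = p ^ n)
    (u : K) (hu : u ≠ 0) :
    u ^ (p ^ k - 1) = -1 ↔ ((u ^ 2) ^ (p ^ s) = u ^ 2 ∧ ¬ u ^ (p ^ s) = u) := by
  have hp0 : 0 < p := hp.pos
  have hsn : s ∣ n := hs ▸ Nat.gcd_dvd_left n k
  have hsk : s ∣ k := hs ▸ Nat.gcd_dvd_right n k
  have hs0 : 0 < s := by
    rw [hs]; exact Nat.gcd_pos_of_pos_left k hn
  -- u ^ p ^ n = u
  have hun : u ^ p ^ n = u := by rw [← hcard]; exact FiniteField.pow_card u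
  -- -u ≠ u
  have hchar : ringChar K ≠ 2 := by
    have hc : ((p : K)) = 0 := by
      have := FiniteField.cast_card_eq_zero K
      rw [hcard] at this
      push_cast at this
      exact pow_eq_zero_iff hn.ne' |>.mp this
    have hdvd : ringChar K ∣ p := (ringChar.spec K p).mp hc
    rcases (Nat.Prime.eq_one_or_self_of_dvd hp _ hdvd) with h1 | h1
    · exact absurd h1 (CharP.ringChar_ne_one)
    · rw [h1]; intro h2; rw [h2] at hodd; have := Nat.odd_iff.mp hodd; omega
  have h2K : (2 : K) ≠ 0 := Ring.two_ne_zero hchar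
  have hneg : -u ≠ u := by
    intro h
    have : (2 : K) * u = 0 := by linear_combination -h
    rcases mul_eq_zero.mp this with h' | h'
    · exact h2K h'
    · exact hu h'
  constructor
  · intro h
    have hpk1 : p ^ k - 1 + 1 = p ^ k := Nat.sub_add_cancel (Nat.one_le_pow _ _ hp0)
    have hk' : u ^ p ^ k = -u := by
      calc u ^ p ^ k = u ^ (p ^ k - 1 + 1) := by rw [hpk1]
        _ = u ^ (p ^ k - 1) * u := pow_succ u _
        _ = -u := by rw [h]; ring
    have hPs := aux_gcd hodd u n k ⟨1, by ring, by rw [hun, one_mul]⟩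
      ⟨-1, by ring, by rw [hk']; ring⟩
    rw [← hs] at hPs
    obtain ⟨ε, hε, hεs⟩ := hPs
    rcases mul_self_eq_one_iff.mp hε with h1 | h1
    · -- ε = 1 : contradiction with u ^ p ^ k = -u
      exfalso
      subst h1
      have := aux_iter hodd hε hεs (k / s)
      rw [Nat.mul_div_cancel' hsk, one_pow, one_mul, hk'] at this
      exact hneg this
    · subst h1
      rw [neg_one_mul] at hεs
      constructor
      · rw [← pow_mul, mul_comm, pow_mul, hεs, neg_sq]
      · rw [hεs]; exact hneg
  · rintro ⟨h1, h2⟩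
    have hsq : u ^ p ^ s * u ^ p ^ s = u * u := by
      have : (u ^ p ^ s) ^ 2 = u ^ 2 := by
        rw [← pow_mul, mul_comm, pow_mul]; exact h1
      simpa [pow_two] using this
    have hεs : u ^ p ^ s = -u := by
      rcases mul_self_eq_mul_self_iff.mp hsq with h | h
      · exact absurd h h2
      · exact h
    have hεs' : u ^ p ^ s = (-1 : K) * u := by rw [hεs]; ring
    have hεε : (-1 : K) * (-1 : K) = 1 := by ring
    have hcop : Nat.Coprime (n / s) (k / s) := by
      rw [hs]; exact Nat.coprime_div_gcd_div_gcd (hs ▸ hs0)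
    have hkt := aux_iter hodd hεε hεs' (k / s)
    rw [Nat.mul_div_cancel' hsk] at hkt
    have hodd_t : Odd (k / s) := by
      rcases Nat.even_or_odd (k / s) with ht | ht
      · exfalso
        have hr : Odd (n / s) := by
          rcases Nat.even_or_odd (n / s) with hr | hr
          · exfalso
            have : 2 ∣ Nat.gcd (n / s) (k / s) :=
              Nat.dvd_gcd hr.two_dvd ht.two_dvd
            rw [hcop] at this
            omega
          · exact hr
        have hnr := aux_iter hodd hεε hεs' (n / s)
        rw [Nat.mul_div_cancel' hsn, hun, hr.neg_one_pow, neg_one_mul] at hnr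
        exact hneg hnr.symm
      · exact ht
    rw [hodd_t.neg_one_pow, neg_one_mul] at hkt
    -- hkt : u ^ p ^ k = -u
    have hpk1 : p ^ k - 1 + 1 = p ^ k := Nat.sub_add_cancel (Nat.one_le_pow _ _ hp0)
    apply mul_right_cancel₀ hu
    calc u ^ (p ^ k - 1) * u = u ^ (p ^ k - 1 + 1) := (pow_succ u _).symm
      _ = u ^ p ^ k := by rw [hpk1]
      _ = -u := hkt
      _ = -1 * u := by ring
end

section
/- Let n be an odd positive integer and F(x) = x^4 on F_{3^n}. Then ∇_F(a,b) = 0 for all a, b ∈ F_{3^n}^*; that is, F is second-order zero differentially 0-uniform over F_{3^n}. -/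
theorem stmt_8 (n : ℕ) (hn : Odd n) (K : Type*) [Field K] [Fintype K]
    (hcard : Fintype.card K = 3 ^ n) :
    ∀ a b : K, a ≠ 0 → b ≠ 0 →
      {x : K | (x + a + b) ^ 4 - (x + a) ^ 4 - (x + b) ^ 4 + x ^ 4 = 0}.ncard = 0 := by
  intro a b ha hb
  have h3 : (3 : K) = 0 := by
    have hc : ((Fintype.card K : ℕ) : K) = 0 := FiniteField.cast_card_eq_zero K
    rw [hcard] at hc
    push_cast at hc
    have hn1 : n ≠ 0 := by rintro rfl; exact (Nat.not_odd_iff_even.2 Even.zero) hn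
    exact pow_eq_zero_iff hn1 |>.1 hc
  -- -1 is not a square
  have hmod : Fintype.card K % 4 = 3 := by
    rw [hcard]
    obtain ⟨j, rfl⟩ := hn
    have h9 : 9 ^ j % 4 = 1 := by rw [Nat.pow_mod]; norm_num
    have he : 3 ^ (2 * j + 1) = 9 ^ j * 3 := by rw [pow_succ, pow_mul]; norm_num
    rw [he, Nat.mul_mod, h9]
  have hns : ¬ IsSquare (-1 : K) := by
    rw [FiniteField.isSquare_neg_one_iff]
    omega
  have hab : a ^ 2 + b ^ 2 ≠ 0 := by
    intro h
    apply hns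
    have hb2 : b ^ 2 ≠ 0 := pow_ne_zero 2 hb
    refine ⟨a / b, ?_⟩
    field_simp
    linear_combination -h
  have key : ∀ x : K, (x + a + b) ^ 4 - (x + a) ^ 4 - (x + b) ^ 4 + x ^ 4
      = a * b * (a ^ 2 + b ^ 2) := by
    intro x
    linear_combination (4*a*b*x^2 + 4*a*b*x*(a+b) + a*b^3 + 2*a^2*b^2 + a^3*b) * h3
  have hset : {x : K | (x + a + b) ^ 4 - (x + a) ^ 4 - (x + b) ^ 4 + x ^ 4 = 0} = ∅ := by
    ext x
    simp only [Set.mem_setOf_eq, Set.mem_empty_iff_false, iff_false]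
    rw [key x]
    exact mul_ne_zero (mul_ne_zero ha hb) hab
  rw [hset, Set.ncard_empty]
end

section
/- Let n > 1 be an even integer and F(x) = x^4 on F_{3^n}. Then the second-order zero differential uniformity of F equals 3^n; that is, max{∇_F(a,b) : a, b ∈ F_{3^n}^*} = 3^n, and in particular there exist a, b ∈ F_{3^n}^* with ∇_F(a,b) = 3^n. -/
theorem stmt_9 (n : ℕ) (hn : 1 < n) (hne : Even n) (K : Type*) [Field K] [Fintype K]
    (hcard : Fintype.card K = 3 ^ n) :
    IsGreatest {c : ℕ | ∃ a b : K, a ≠ 0 ∧ b ≠ 0 ∧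
      c = {x : K | (x + a + b) ^ 4 - (x + a) ^ 4 - (x + b) ^ 4 + x ^ 4 = 0}.ncard}
      (3 ^ n) := by
  have hcardK : Nat.card K = 3 ^ n := by
    rw [Nat.card_eq_fintype_card, hcard]
  have h3 : (3 : K) = 0 := by
    have h := FiniteField.cast_card_eq_zero K
    rw [hcard] at h
    push_cast at h
    exact pow_eq_zero_iff (by omega) |>.mp h
  -- -1 is a square
  have hsq : IsSquare (-1 : K) := by
    rw [FiniteField.isSquare_neg_one_iff, hcard]
    obtain ⟨k, hk⟩ := hne
    have : 3 ^ n % 4 = 1 := by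
      have h9 : 3 ^ n = 9 ^ k := by rw [hk, ← two_mul, pow_mul]; norm_num
      rw [h9, Nat.pow_mod]
      simp
    omega
  obtain ⟨i, hi⟩ := hsq
  have hi2 : i * i = -1 := hi.symm
  have hine : i ≠ 0 := by
    intro h
    rw [h, mul_zero] at hi2
    exact one_ne_zero (α := K) (by linear_combination hi2)
  constructor
  · refine ⟨1, i, one_ne_zero, hine, ?_⟩
    have huniv : {x : K | (x + 1 + i) ^ 4 - (x + 1) ^ 4 - (x + i) ^ 4 + x ^ 4 = 0} = Set.univ := by
      ext x
      simp only [Set.mem_setOf_eq, Set.mem_univ, iff_true]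
      linear_combination (4*i*x^2 + 4*i*x - 4*x - 2) * h3 - (12*x + 4*i + 6) * hi
    rw [huniv, Set.ncard_univ, hcardK]
  · rintro c ⟨a, b, ha, hb, rfl⟩
    calc {x : K | (x + a + b) ^ 4 - (x + a) ^ 4 - (x + b) ^ 4 + x ^ 4 = 0}.ncard
        ≤ (Set.univ : Set K).ncard := Set.ncard_le_ncard (Set.subset_univ _) Set.finite_univ
      _ = 3 ^ n := by rw [Set.ncard_univ, hcardK]
end

section
/- Let n be an odd positive integer and F(x) = x^4 on F_{3^n}. Then F is a perfect nonlinear (PN) function: for every a ∈ F_{3^n}^* and every b ∈ F_{3^n}, the equation (x+a)^4 − x^4 = b has exactly one solution x ∈ F_{3^n}; equivalently, DDT_F(a,b) = 1 for all a ≠ 0. -/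
theorem stmt_10 (n : ℕ) (hn : Odd n) (K : Type*) [Field K] [Fintype K]
    (hcard : Fintype.card K = 3 ^ n) :
    ∀ a b : K, a ≠ 0 →
      (∃! x : K, (x + a) ^ 4 - x ^ 4 = b) ∧
      {x : K | (x + a) ^ 4 - x ^ 4 = b}.ncard = 1 := by
  -- characteristic is 3
  obtain ⟨m, hp, hm⟩ := FiniteField.card K (ringChar K)
  have hchar3 : ringChar K = 3 := by
    have hdvd : ringChar K ∣ 3 ^ n := by
      rw [← hcard, hm]
      exact dvd_pow_self _ (PNat.pos m).ne'
    exact (Nat.prime_dvd_prime_iff_eq hp Nat.prime_three).mp (hp.dvd_of_dvd_pow hdvd)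
  have h3 : (3 : K) = 0 := by
    have := ringChar.spec K 3
    simpa [hchar3] using this
  -- -1 is not a square
  have hmod : Fintype.card K % 4 = 3 := by
    obtain ⟨k, hk⟩ := hn
    rw [hcard, hk]
    have h9 : 9 ^ k % 4 = 1 := by
      rw [Nat.pow_mod]; norm_num
    have : (3:ℕ) ^ (2 * k + 1) = 3 * 9 ^ k := by
      rw [pow_succ, pow_mul]; ring
    rw [this, Nat.mul_mod, h9]
  have hns : ¬ IsSquare (-1 : K) := by
    rw [FiniteField.isSquare_neg_one_iff, hmod]
    simp
  intro a b ha
  -- the derivative map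
  set f : K → K := fun x => (x + a) ^ 4 - x ^ 4 with hf
  have hfeq : ∀ x : K, f x = a * x ^ 3 + a ^ 3 * x + a ^ 4 := by
    intro x
    have : (x + a) ^ 4 - x ^ 4 - (a * x ^ 3 + a ^ 3 * x + a ^ 4)
        = 3 * (a * x ^ 3 + 2 * a ^ 2 * x ^ 2 + a ^ 3 * x) := by ring
    have h0 : (x + a) ^ 4 - x ^ 4 - (a * x ^ 3 + a ^ 3 * x + a ^ 4) = 0 := by
      rw [this, h3]; ring
    simp only [hf]
    linear_combination h0
  have hinj : Function.Injective f := by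
    intro x y hxy
    rw [hfeq, hfeq] at hxy
    have hd : a * (x - y) ^ 3 + a ^ 3 * (x - y) = 0 := by
      have hc : (x - y) ^ 3 - (x ^ 3 - y ^ 3) = -3 * (x ^ 2 * y - x * y ^ 2) := by ring
      linear_combination hxy + a * hc - a * (x ^ 2 * y - x * y ^ 2) * h3
    by_contra hne
    have hz : x - y ≠ 0 := sub_ne_zero.mpr hne
    have : (x - y) * (a * (x - y) ^ 2 + a ^ 3) = 0 := by linear_combination hd
    have h2 : a * (x - y) ^ 2 + a ^ 3 = 0 := by
      rcases mul_eq_zero.mp this with h | h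
      · exact absurd h hz
      · exact h
    have : ((x - y) / a) ^ 2 = -1 := by
      rw [div_pow, div_eq_iff (pow_ne_zero 2 ha)]
      apply mul_left_cancel₀ ha
      linear_combination h2
    exact hns ⟨(x - y) / a, by rw [← this]; ring⟩
  have hbij : Function.Bijective f := Finite.injective_iff_bijective.mp hinj
  obtain ⟨x₀, hx₀⟩ := hbij.surjective b
  have hexu : ∃! x : K, (x + a) ^ 4 - x ^ 4 = b :=
    ⟨x₀, hx₀, fun y hy => hinj (hy.trans hx₀.symm)⟩
  refine ⟨hexu, ?_⟩
  have hset : {x : K | (x + a) ^ 4 - x ^ 4 = b} = {x₀} := by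
    ext y
    simp only [Set.mem_setOf_eq, Set.mem_singleton_iff]
    exact ⟨fun hy => hinj (hy.trans hx₀.symm), fun hy => hy ▸ hx₀⟩
  rw [hset, Set.ncard_singleton]
end

section
/- Let n be an even positive integer and F(x) = x^4 on F_{3^n}. Then the differential uniformity of F equals 3: DDT_F(a,b) ≤ 3 for all a ∈ F_{3^n}^* and b ∈ F_{3^n}, and there exist a ∈ F_{3^n}^* and b ∈ F_{3^n} with DDT_F(a,b) = 3. -/
open Polynomial

theorem stmt_11 (n : ℕ) (hn : 0 < n) (hne : Even n) (K : Type*) [Field K] [Fintype K]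
    (hcard : Fintype.card K = 3 ^ n) :
    (∀ a b : K, a ≠ 0 → {x : K | (x + a) ^ 4 - x ^ 4 = b}.ncard ≤ 3) ∧
    (∃ a b : K, a ≠ 0 ∧ {x : K | (x + a) ^ 4 - x ^ 4 = b}.ncard = 3) := by
  classical
  have hrc := ringChar.charP K
  obtain ⟨m, hprime, hcard'⟩ := FiniteField.card K (ringChar K)
  have hr3 : ringChar K = 3 := by
    have hd : ringChar K ∣ 3 ^ n := by
      rw [← hcard, hcard']
      exact dvd_pow_self _ (by exact_mod_cast m.pos.ne')
    have h3 : ringChar K ∣ 3 := hprime.dvd_of_dvd_pow hd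
    exact (Nat.prime_dvd_prime_iff_eq hprime Nat.prime_three).mp h3
  rw [hr3] at hrc
  have h3 : (3 : K) = 0 := CharP.cast_eq_zero K 3
  have key : ∀ x a : K, (x + a) ^ 4 - x ^ 4 = a * x ^ 3 + a ^ 3 * x + a ^ 4 := by
    intro x a
    linear_combination (a * x ^ 3 + 2 * a ^ 2 * x ^ 2 + a ^ 3 * x) * h3
  have h2 : (2 : K) ≠ 0 := by
    intro h
    have := (CharP.cast_eq_zero_iff K 3 2).mp (by exact_mod_cast h)
    omega
  constructor
  · intro a b ha
    set p : K[X] := C a * X ^ 3 + C (a ^ 3) * X + C (a ^ 4 - b) with hp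
    have hpne : p ≠ 0 := by
      intro h
      have hc : p.coeff 3 = a := by
        rw [hp]
        simp [coeff_add, coeff_C_mul, coeff_X_pow, coeff_X, coeff_C, -map_pow]
      rw [h] at hc
      exact ha (by simpa using hc.symm)
    have hdeg : p.natDegree ≤ 3 := by
      rw [hp]; compute_degree
    have heval : ∀ x : K, p.eval x = a * x ^ 3 + a ^ 3 * x + (a ^ 4 - b) := by
      intro x; simp [hp]
    have hset : {x : K | (x + a) ^ 4 - x ^ 4 = b} = ↑p.roots.toFinset := by
      ext x
      simp only [Set.mem_setOf_eq, Finset.coe_sort_coe, Multiset.mem_toFinset,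
        Finset.mem_coe, mem_roots hpne, IsRoot.def, heval]
      rw [key]
      constructor
      · intro h; linear_combination h
      · intro h; linear_combination h
    rw [hset, Set.ncard_coe_finset]
    calc p.roots.toFinset.card ≤ Multiset.card p.roots := Multiset.toFinset_card_le _
      _ ≤ p.natDegree := p.card_roots'
      _ ≤ 3 := hdeg
  · obtain ⟨i, hi⟩ : IsSquare (-1 : K) := by
      rw [FiniteField.isSquare_neg_one_iff, hcard]
      obtain ⟨k, rfl⟩ := hne
      have : 3 ^ (k + k) % 4 = 1 := by
        rw [← two_mul, pow_mul, Nat.pow_mod]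
        norm_num
      omega
    have hii : i * i = -1 := hi.symm
    have hi0 : i ≠ 0 := by
      intro h
      rw [h] at hii
      simp at hii
    have hine : i ≠ -i := by
      intro h
      have : (2 : K) * i = 0 := by linear_combination h
      rcases mul_eq_zero.mp this with h' | h'
      · exact h2 h'
      · exact hi0 h'
    refine ⟨1, 1, one_ne_zero, ?_⟩
    have hset : {x : K | (x + 1) ^ 4 - x ^ 4 = 1} = {0, i, -i} := by
      ext x
      simp only [Set.mem_setOf_eq, Set.mem_insert_iff, Set.mem_singleton_iff]
      rw [key]
      constructor
      · intro h
        have hx : x * ((x - i) * (x + i)) = 0 := by linear_combination h - x * hii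
        rcases mul_eq_zero.mp hx with h' | h'
        · exact Or.inl h'
        · rcases mul_eq_zero.mp h' with h'' | h''
          · exact Or.inr (Or.inl (by linear_combination h''))
          · exact Or.inr (Or.inr (by linear_combination h''))
      · rintro (rfl | h | h)
        · ring
        · rw [h]; linear_combination i * hii
        · rw [h]; linear_combination -i * hii
    have h0ni : (0 : K) ∉ ({i, -i} : Set K) := by
      simp only [Set.mem_insert_iff, Set.mem_singleton_iff]
      push_neg
      exact ⟨fun h => hi0 h.symm, fun h => hi0 (neg_eq_zero.mp h.symm)⟩
    rw [hset, Set.ncard_insert_of_notMem h0ni,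
      Set.ncard_insert_of_notMem (by simpa using hine), Set.ncard_singleton]
end
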